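/- arXiv:1706.07317 — 7 statements merged into one kernel-verified Lean document; each statement's English description precedes it below -/
import Mathlib

section
/- Let G be a compactly generated t.d.l.c. group such that G has no infinite discrete normal subgroup and such that there exists a compact open subgroup V of G whose normal core in G is trivial. Then every non-trivial closed normal subgroup of G contains a minimal non-trivial closed normal subgroup of G. -/
open scoped Pointwise

open scoped Pointwise

/-- The quasi-center of a topological group: the set of elements with open centralizer. -/
def QuasiCenter (G : Type*) [Group G] [TopologicalSpace G] : Set G :=
  {g : G | IsOpen ((Subgroup.centralizer {g} : Subgroup G) : Set G)}

/-- A topological group is compactly generated if it is generated by a compact subset. -/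
def IsCompactlyGeneratedGroup (G : Type*) [Group G] [TopologicalSpace G] : Prop :=
  ∃ S : Set G, IsCompact S ∧ Subgroup.closure S = ⊤

/-- A t.d.l.c. group is regionally expansive if it has a compactly generated open subgroup `O`
together with a compact open subgroup `W` of `O` whose normal core in `O` is trivial. -/
def RegionallyExpansive (G : Type*) [Group G] [TopologicalSpace G] : Prop :=
  ∃ O W : Subgroup G,
    IsOpen (O : Set G) ∧
    (∃ S : Set G, S ⊆ (O : Set G) ∧ IsCompact S ∧ Subgroup.closure S = O) ∧
    W ≤ O ∧ IsOpen (W : Set G) ∧ IsCompact (W : Set G) ∧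
    (W.subgroupOf O).normalCore = ⊥

/-- A topological group is topologically simple if it is non-trivial and its only closed
normal subgroups are the trivial subgroup and the whole group. -/
def TopologicallySimple (G : Type*) [Group G] [TopologicalSpace G] : Prop :=
  Nontrivial G ∧ ∀ N : Subgroup G, N.Normal → IsClosed (N : Set G) → N = ⊥ ∨ N = ⊤

/-- The monolith: the intersection of all non-trivial closed normal subgroups. -/
def Monolith (G : Type*) [Group G] [TopologicalSpace G] : Subgroup G :=
  ⨅ (N : Subgroup G) (_ : N ≠ ⊥) (_ : N.Normal) (_ : IsClosed (N : Set G)), N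

/-- A topological group is monolithic if its monolith is non-trivial. -/
def Monolithic (G : Type*) [Group G] [TopologicalSpace G] : Prop :=
  Monolith G ≠ ⊥

/-- A t.d.l.c. group is robustly monolithic if it is monolithic and the monolith is
non-discrete, regionally expansive and topologically simple. -/
def RobustlyMonolithic (G : Type*) [Group G] [TopologicalSpace G] : Prop :=
  Monolithic G ∧ ¬ DiscreteTopology ↥(Monolith G) ∧
    RegionallyExpansive ↥(Monolith G) ∧ TopologicallySimple ↥(Monolith G)

/-- [A]-semisimple: trivial quasi-center and no non-trivial abelian locally normal subgroup. -/
def ASemisimple (G : Type*) [Group G] [TopologicalSpace G] : Prop :=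
  QuasiCenter G = {1} ∧
    ∀ H : Subgroup G, IsOpen ((Subgroup.normalizer (H : Set G) : Subgroup G) : Set G) →
      (∀ a ∈ H, ∀ b ∈ H, a * b = b * a) → H = ⊥

/-- A minimal non-trivial closed normal subgroup. -/
def IsMinimalClosedNormal {G : Type*} [Group G] [TopologicalSpace G] (N : Subgroup G) : Prop :=
  N ≠ ⊥ ∧ N.Normal ∧ IsClosed (N : Set G) ∧
    ∀ M : Subgroup G, M ≠ ⊥ → M.Normal → IsClosed (M : Set G) → M ≤ N → M = N

/-- The quasi-centralizer of a subgroup `K` in `G`: the set of elements of `G` centralizing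
some open subgroup of `K`. -/
def QuasiCentralizer {G : Type*} [Group G] [TopologicalSpace G] (K : Subgroup G) : Set G :=
  {g : G | ∃ V : Subgroup G, V ≤ K ∧ IsOpen {k : ↥K | (k : G) ∈ V} ∧ ∀ v ∈ V, g * v = v * g}

/-- A SIN-group: a basis of identity neighborhoods consisting of conjugation-invariant
open sets. -/
def SINGroup (G : Type*) [Group G] [TopologicalSpace G] : Prop :=
  ∀ U ∈ nhds (1 : G), ∃ V : Set G, IsOpen V ∧ (1 : G) ∈ V ∧ V ⊆ U ∧
    ∀ g x : G, x ∈ V → g * x * g⁻¹ ∈ V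

/-- The quasi-centralizer of `K` in `H`: elements of `H` centralizing an open subgroup of `K`. -/
def QuasiCentralizerIn {G : Type*} [Group G] [TopologicalSpace G] (H K : Subgroup G) : Set G :=
  {h : G | h ∈ H ∧ ∃ V : Subgroup G, V ≤ K ∧ IsOpen {k : ↥K | (k : G) ∈ V} ∧
    ∀ v ∈ V, h * v = v * h}

/-- The commensurator of `K` in `H`: elements `h ∈ H` such that `K` and `hKh⁻¹` are
commensurate. -/
def CommensuratorIn {G : Type*} [Group G] (H K : Subgroup G) : Set G :=
  {h : G | h ∈ H ∧ Subgroup.Commensurable K (Subgroup.map (MulAut.conj h).toMonoidHom K)}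

/-- Topologically characteristically simple: the only closed subgroups invariant under every
topological group automorphism are trivial and the whole group. -/
def TopologicallyCharacteristicallySimple (G : Type*) [Group G] [TopologicalSpace G] : Prop :=
  ∀ N : Subgroup G, IsClosed (N : Set G) →
    (∀ φ : G ≃* G, Continuous ⇑φ → Continuous ⇑φ.symm → Subgroup.map φ.toMonoidHom N = N) →
    N = ⊥ ∨ N = ⊤

/-!
If `N` contains a finite non-trivial closed normal subgroup, one of least order is minimal.
Otherwise every non-trivial closed normal subgroup `M ≤ N` is infinite, hence not discrete, so
`M ⊓ V ≠ ⊥`. Since `V` has trivial normal core, `M ⊓ V` is not normalised by some `d` in the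
symmetrised compact generating set `S ∪ S⁻¹`, so `M` meets the compact set of elements of `V`
that such a `d` conjugates out of `V`, a set avoiding `1`. By compactness the intersection of a
chain of such subgroups still meets it, and Zorn's lemma gives a minimal one.
-/

section

variable {G : Type*} [Group G]

theorem Subgroup.inf_normal_of_forall_conj_mem {S : Set G} (hS : Subgroup.closure S = ⊤)
    {M V : Subgroup G} [hM : M.Normal]
    (h : ∀ d ∈ S ∪ S⁻¹, ∀ c ∈ M ⊓ V, d * c * d⁻¹ ∈ V) : (M ⊓ V).Normal := by
  have conj_mem : ∀ d ∈ S ∪ S⁻¹, ∀ c ∈ M ⊓ V, d * c * d⁻¹ ∈ M ⊓ V :=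
    fun d hd c hc => ⟨hM.conj_mem c hc.1 d, h d hd c hc⟩
  rw [← Subgroup.normalizer_eq_top_iff, eq_top_iff, ← hS, Subgroup.closure_le]
  intro s hs
  refine Subgroup.mem_normalizer_iff.mpr fun c => ⟨conj_mem s (Or.inl hs) c, fun hc => ?_⟩
  simpa [mul_assoc] using conj_mem s⁻¹ (Or.inr (by simpa using hs)) _ hc

def escapingSet (V : Subgroup G) (D : Set G) : Set G :=
  {v | v ∈ V ∧ ∃ d ∈ D, d * v * d⁻¹ ∉ V}

theorem one_notMem_escapingSet (V : Subgroup G) (D : Set G) : (1 : G) ∉ escapingSet V D := by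
  simp [escapingSet, V.one_mem]

theorem inter_escapingSet_nonempty {S : Set G} (hS : Subgroup.closure S = ⊤)
    {V : Subgroup G} (hV : V.normalCore = ⊥) {M : Subgroup G} [M.Normal] (hMV : M ⊓ V ≠ ⊥) :
    ((M : Set G) ∩ escapingSet V (S ∪ S⁻¹)).Nonempty := by
  by_contra hempty
  have hconj : ∀ d ∈ S ∪ S⁻¹, ∀ c ∈ M ⊓ V, d * c * d⁻¹ ∈ V := by
    intro d hd c hc
    by_contra hout
    exact hempty ⟨c, hc.1, hc.2, d, hd, hout⟩
  have : (M ⊓ V).Normal := Subgroup.inf_normal_of_forall_conj_mem hS hconj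
  exact hMV (le_bot_iff.mp (hV ▸ Subgroup.normal_le_normalCore.mpr inf_le_right))

variable [TopologicalSpace G]

theorem isCompact_escapingSet [IsTopologicalGroup G] {V : Subgroup G}
    (hVcompact : IsCompact (V : Set G)) (hVopen : IsOpen (V : Set G)) {D : Set G}
    (hD : IsCompact D) : IsCompact (escapingSet V D) := by
  have hclosed : IsClosed ((fun p : G × G => p.2 * p.1 * p.2⁻¹) ⁻¹' (V : Set G)ᶜ) :=
    hVopen.isClosed_compl.preimage (by fun_prop)
  have hK := ((hVcompact.prod hD).inter_right hclosed).image continuous_fst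
  convert hK using 1
  ext v
  simp [escapingSet, and_assoc]

theorem discreteTopology_of_inf_eq_bot [IsTopologicalGroup G] {M V : Subgroup G}
    (hV : IsOpen (V : Set G)) (hMV : M ⊓ V = ⊥) : DiscreteTopology M := by
  refine discreteTopology_of_isOpen_singleton_one ?_
  convert hV.preimage continuous_subtype_val using 1
  ext ⟨x, hx⟩
  constructor
  · rintro ⟨⟩
    exact V.one_mem
  · intro hxV
    have : x ∈ M ⊓ V := ⟨hx, hxV⟩
    rw [hMV, Subgroup.mem_bot] at this
    exact Subtype.ext this

def IsNontrivialClosedNormal (M : Subgroup G) : Prop :=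
  M ≠ ⊥ ∧ M.Normal ∧ IsClosed (M : Set G)

theorem isMinimalClosedNormal_of_minimal {M N : Subgroup G}
    (h : Minimal (fun L => IsNontrivialClosedNormal L ∧ L ≤ N) M) : IsMinimalClosedNormal M := by
  obtain ⟨⟨⟨hM, hMnormal, hMclosed⟩, hMN⟩, hmin⟩ := h
  exact ⟨hM, hMnormal, hMclosed, fun L hL hLnormal hLclosed hLM =>
    le_antisymm hLM (hmin ⟨⟨hL, hLnormal, hLclosed⟩, hLM.trans hMN⟩ hLM)⟩

theorem exists_isMinimalClosedNormal_le_of_finite {F : Subgroup G}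
    (hF : IsNontrivialClosedNormal F) (hFfin : (F : Set G).Finite) :
    ∃ M, IsMinimalClosedNormal M ∧ M ≤ F := by
  have hfin : {L : Subgroup G | IsNontrivialClosedNormal L ∧ L ≤ F}.Finite :=
    (hFfin.finite_subsets.preimage SetLike.coe_injective.injOn).subset fun L hL => hL.2
  obtain ⟨M, hMF, hM⟩ := hfin.exists_le_minimal (a := F) ⟨hF, le_rfl⟩
  exact ⟨M, isMinimalClosedNormal_of_minimal hM, hMF⟩

theorem exists_isMinimalClosedNormal_le_of_forall_inter_nonempty {K : Set G} (hK : IsCompact K)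
    (h1 : (1 : G) ∉ K) {N : Subgroup G} (hN : IsNontrivialClosedNormal N)
    (hmeet : ∀ M, IsNontrivialClosedNormal M → M ≤ N → ((M : Set G) ∩ K).Nonempty) :
    ∃ M, IsMinimalClosedNormal M ∧ M ≤ N := by
  set s : Set (Subgroup G)ᵒᵈ :=
    {L | IsNontrivialClosedNormal (OrderDual.ofDual L) ∧ OrderDual.ofDual L ≤ N}
  have hchain : ∀ c ⊆ s, IsChain (· ≤ ·) c → ∀ y ∈ c, ∃ lb ∈ s, ∀ z ∈ c, z ≤ lb := by
    intro c hcs hc y hy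
    have : Nonempty c := ⟨⟨y, hy⟩⟩
    set L : Subgroup G := ⨅ z : c, OrderDual.ofDual z.1
    have hLle : ∀ z ∈ c, L ≤ OrderDual.ofDual z := fun z hz => iInf_le (fun z : c => _) ⟨z, hz⟩
    have hLnormal : L.Normal := Subgroup.normal_iInf_normal fun z => (hcs z.2).1.2.1
    have hLclosed : IsClosed (L : Set G) := by
      simpa [L] using isClosed_iInter fun z : c => (hcs z.2).1.2.2
    have hdir : Directed (· ⊇ ·) fun z : c => ((OrderDual.ofDual z.1 : Subgroup G) : Set G) :=
      hc.directedOn.directed_val.mono_comp _ fun _ _ h => SetLike.coe_subset_coe.mpr h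
    have hKL : (K ∩ L).Nonempty := by
      rw [Set.nonempty_iff_ne_empty]
      intro hempty
      obtain ⟨z, hz⟩ := hK.elim_directed_family_closed _ (fun z => (hcs z.2).1.2.2)
        (by simpa [L] using hempty) hdir
      rw [Set.inter_comm, ← Set.not_nonempty_iff_eq_empty] at hz
      exact hz (hmeet _ (hcs z.2).1 (hcs z.2).2)
    obtain ⟨x, hxK, hxL⟩ := hKL
    have hL : L ≠ ⊥ := fun hbot =>
      h1 (Subgroup.mem_bot.mp (hbot ▸ hxL : x ∈ (⊥ : Subgroup G)) ▸ hxK)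
    exact ⟨OrderDual.toDual L, ⟨⟨hL, hLnormal, hLclosed⟩, (hLle y hy).trans (hcs hy).2⟩, hLle⟩
  obtain ⟨M, -, hM⟩ := zorn_le_nonempty₀ s hchain (OrderDual.toDual N) ⟨hN, le_rfl⟩
  exact ⟨_, isMinimalClosedNormal_of_minimal (maximal_toDual.mp hM), hM.prop.2⟩

end

theorem stmt0_general (G : Type*) [Group G] [TopologicalSpace G] [IsTopologicalGroup G]
    (hcg : IsCompactlyGeneratedGroup G)
    (hnodisc : ∀ N : Subgroup G, N.Normal → DiscreteTopology ↥N → (N : Set G).Finite)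
    (V : Subgroup G) (hVcompact : IsCompact (V : Set G)) (hVopen : IsOpen (V : Set G))
    (hVcore : V.normalCore = ⊥)
    (N : Subgroup G) (hN : N ≠ ⊥) (hNnormal : N.Normal) (hNclosed : IsClosed (N : Set G)) :
    ∃ M : Subgroup G, IsMinimalClosedNormal M ∧ M ≤ N := by
  obtain ⟨S, hScompact, hSgen⟩ := hcg
  by_cases hfin : ∃ F, IsNontrivialClosedNormal F ∧ F ≤ N ∧ (F : Set G).Finite
  · obtain ⟨F, hF, hFN, hFfin⟩ := hfin
    obtain ⟨M, hM, hMF⟩ := exists_isMinimalClosedNormal_le_of_finite hF hFfin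
    exact ⟨M, hM, hMF.trans hFN⟩
  · refine exists_isMinimalClosedNormal_le_of_forall_inter_nonempty
      (isCompact_escapingSet hVcompact hVopen (hScompact.union hScompact.inv))
      (one_notMem_escapingSet V _) ⟨hN, hNnormal, hNclosed⟩ fun M hM hMN => ?_
    have : M.Normal := hM.2.1
    refine inter_escapingSet_nonempty hSgen hVcore fun hMV => hfin ⟨M, hM, hMN, ?_⟩
    exact hnodisc M this (discreteTopology_of_inf_eq_bot hVopen hMV)

theorem stmt0 (G : Type*) [Group G] [TopologicalSpace G] [IsTopologicalGroup G] [T2Space G] [TotallyDisconnectedSpace G] [LocallyCompactSpace G]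
    (hcg : IsCompactlyGeneratedGroup G)
    (hnodisc : ∀ N : Subgroup G, N.Normal → DiscreteTopology ↥N → (N : Set G).Finite)
    (V : Subgroup G) (hVcompact : IsCompact (V : Set G)) (hVopen : IsOpen (V : Set G))
    (hVcore : V.normalCore = ⊥)
    (N : Subgroup G) (hN : N ≠ ⊥) (hNnormal : N.Normal) (hNclosed : IsClosed (N : Set G)) :
    ∃ M : Subgroup G, IsMinimalClosedNormal M ∧ M ≤ N :=
  stmt0_general G hcg hnodisc V hVcompact hVopen hVcore N hN hNnormal hNclosed
end

section
/- Let G be a t.d.l.c. group, H a (not necessarily closed) cocompact subgroup of G, and O a compactly generated open subgroup of G. Then there exists a finite subset {h₁, …, hₙ} of H ∩ O such that the subgroup generated by {h₁, …, hₙ} is cocompact in O. -/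
open scoped Pointwise

open scoped Pointwise

/-!
Fix a compact open subgroup `V ≤ O` (van Dantzig). Since `G = H X` with `X` compact, `X` is
covered by finitely many translates `x V`, and choosing one point of `O` in each double coset
`H x V` that meets `O` gives a finite `R ⊆ O` with `O ⊆ (H ∩ O) R V`. Let `S` be a compact
generating set of `O` and `D = S ∪ S⁻¹`. The compact set `R V D ⊆ O` is covered by finitely many
`c V`, and each such `c` is `l_c r u` with `l_c ∈ H ∩ O`. With `T = {l_c}`, the set `⟨T⟩ R V`
contains `1` and is stable under right multiplication by `D`, hence contains `⟨S⟩ = O`.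
-/

section Group

variable {G : Type*} [Group G]

theorem Subgroup.coe_closure_subset_of_mul_subset {S Y : Set G} (h1 : 1 ∈ Y) (hS : Y * S ⊆ Y)
    (hSinv : Y * S⁻¹ ⊆ Y) : (Subgroup.closure S : Set G) ⊆ Y := fun _ hx =>
  Subgroup.closure_induction_right (p := fun x _ => x ∈ Y) h1
    (fun _ _ _ hs hy => hS (Set.mul_mem_mul hy hs))
    (fun _ _ _ hs hy => hSinv (Set.mul_mem_mul hy (Set.inv_mem_inv.2 hs))) hx

/-- If `o = h x v` and `r = h' x v'` both lie in `O`, then `o = (h h'⁻¹) r (v'⁻¹ v)` with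
`h h'⁻¹ = o v⁻¹ v' r⁻¹ ∈ O`. -/
theorem exists_finset_inter_mul_subset_inf_mul (H O V : Subgroup G) (hVO : V ≤ O)
    (F : Finset G) : ∃ R : Finset G, 1 ∈ R ∧ (R : Set G) ⊆ O ∧
      (O : Set G) ∩ (H * F * V) ⊆ ((H ⊓ O : Subgroup G) : Set G) * R * V := by
  classical
  have hrep : ∀ x : G, ∃ r ∈ O, ((O : Set G) ∩ (H * x • (V : Set G))).Nonempty →
      r ∈ H * x • (V : Set G) := by
    intro x
    by_cases hx : ((O : Set G) ∩ (H * x • (V : Set G))).Nonempty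
    · exact ⟨hx.some, hx.some_mem.1, fun _ => hx.some_mem.2⟩
    · exact ⟨1, O.one_mem, fun h => absurd h hx⟩
  choose r hrO hr using hrep
  refine ⟨insert 1 (F.image r), Finset.mem_insert_self _ _, ?_, ?_⟩
  · intro y hy
    rcases Finset.mem_insert.1 hy with rfl | hy
    · exact O.one_mem
    · obtain ⟨x, -, rfl⟩ := Finset.mem_image.1 hy
      exact hrO x
  · rintro o ⟨ho, _, ⟨h, hh, x, hx, rfl⟩, v, hv, rfl⟩
    obtain ⟨h', hh', _, ⟨v', hv', rfl⟩, hr'⟩ :=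
      hr x ⟨_, ho, h, hh, _, ⟨v, hv, rfl⟩, by simp [mul_assoc]⟩
    simp only [smul_eq_mul] at ho hr' ⊢
    have ho' : h * x * v = h * h'⁻¹ * r x * (v'⁻¹ * v) := by rw [← hr']; group
    have hl : h * h'⁻¹ = h * x * v * v⁻¹ * v' * (r x)⁻¹ := by rw [← hr']; group
    rw [ho']
    refine Set.mul_mem_mul (Set.mul_mem_mul ⟨H.mul_mem hh (H.inv_mem hh'), ?_⟩ ?_)
      (V.mul_mem (V.inv_mem hv') hv)
    · rw [hl]
      exact O.mul_mem (O.mul_mem (O.mul_mem ho (O.inv_mem (hVO hv))) (hVO hv'))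
        (O.inv_mem (hrO x))
    · exact Finset.mem_insert_of_mem (Finset.mem_image_of_mem r hx)

end Group

section TopologicalGroup

variable {G : Type*} [Group G] [TopologicalSpace G] [IsTopologicalGroup G]

theorem IsCompact.exists_finset_subset_mul_subgroup {K : Set G} (hK : IsCompact K)
    {V : Subgroup G} (hV : IsOpen (V : Set G)) : ∃ F : Finset G, ↑F ⊆ K ∧ K ⊆ F * V := by
  obtain ⟨F, hFK, hKF⟩ := hK.elim_nhds_subcover (fun x => x • (V : Set G))
    fun x _ => (hV.smul x).mem_nhds (Set.mem_smul_set.2 ⟨1, V.one_mem, mul_one x⟩)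
  refine ⟨F, hFK, hKF.trans ?_⟩
  rw [Set.iUnion₂_subset_iff]
  exact fun x hx => Set.smul_set_subset_mul hx

/-- Van Dantzig: the stabiliser of a compact open neighbourhood `K` of `1` under left
translation lies in `K`, and it is open because `W K ⊆ K` for a neighbourhood `W` of `1`. -/
theorem exists_isOpen_isCompact_subgroup_subset [T2Space G] [TotallyDisconnectedSpace G]
    [LocallyCompactSpace G] {U : Set G} (hU : U ∈ nhds (1 : G)) :
    ∃ V : Subgroup G, IsOpen (V : Set G) ∧ IsCompact (V : Set G) ∧ (V : Set G) ⊆ U := by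
  obtain ⟨C, hC, hC1⟩ := exists_compact_mem_nhds (1 : G)
  obtain ⟨K, hKc, hK1, hKU⟩ := loc_compact_Haus_tot_disc_of_zero_dim.mem_nhds_iff.1
    (Filter.inter_mem hU (interior_mem_nhds.2 hC1))
  have hK : IsCompact K :=
    hC.of_isClosed_subset hKc.isClosed (hKU.trans (Set.inter_subset_right.trans interior_subset))
  obtain ⟨W, hW1, hWK⟩ := compact_open_separated_mul_left hK hKc.isOpen le_rfl
  have hWK' : ∀ w ∈ W, w • K ⊆ K := fun w hw => (Set.smul_set_subset_mul hw).trans hWK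
  let V := MulAction.stabilizer G K
  have hVK : (V : Set G) ⊆ K := fun g hg => by
    rw [SetLike.mem_coe, MulAction.mem_stabilizer_iff] at hg
    have := Set.smul_mem_smul_set (a := g) hK1
    rwa [hg, smul_eq_mul, mul_one] at this
  have hVo : IsOpen (V : Set G) := by
    refine V.isOpen_of_mem_nhds
      (Filter.mem_of_superset (Filter.inter_mem hW1 (inv_mem_nhds_one G hW1)) ?_)
    rintro w ⟨hw, hw'⟩
    exact (hWK' w hw).antisymm (Set.subset_smul_set_iff.2 (hWK' _ hw'))
  exact ⟨V, hVo, hK.of_isClosed_subset (V.isClosed_of_isOpen hVo) hVK,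
    hVK.trans (hKU.trans Set.inter_subset_left)⟩

theorem exists_finset_subset_closure_mul_of_subset_mul {L O V : Subgroup G}
    (hV : IsOpen (V : Set G)) (hVc : IsCompact (V : Set G)) (hVO : V ≤ O) {S : Set G}
    (hS : IsCompact S) (hSO : Subgroup.closure S = O) {R : Finset G} (hR1 : 1 ∈ R)
    (hRO : (R : Set G) ⊆ O) (hOL : (O : Set G) ⊆ L * R * V) :
    ∃ T : Finset G, (T : Set G) ⊆ L ∧
      (O : Set G) ⊆ Subgroup.closure (T : Set G) * (R * V) := by
  classical
  set X : Set G := R * V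
  have hXV : X * V ⊆ X := by rw [mul_assoc, coe_mul_coe]
  have hSO' : S ⊆ O := hSO ▸ Subgroup.subset_closure
  have hXDO : X * (S ∪ S⁻¹) ⊆ O := Subgroup.mul_subset (Subgroup.mul_subset hRO hVO)
    (Set.union_subset hSO' fun s hs => by simpa using O.inv_mem (hSO' hs))
  obtain ⟨C, hCXD, hXDC⟩ := ((R.finite_toSet.isCompact.mul hVc).mul
    (hS.union hS.inv)).exists_finset_subset_mul_subgroup hV
  have hdecomp : ∀ c ∈ C, ∃ l ∈ L, l⁻¹ * c ∈ X := by
    intro c hc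
    obtain ⟨l, hl, x, hx, rfl⟩ : c ∈ (L : Set G) * X :=
      mul_assoc (L : Set G) R V ▸ hOL (hXDO (hCXD hc))
    exact ⟨l, hl, by simpa using hx⟩
  choose! l hlL hlX using hdecomp
  set T := C.image l
  have hY :
      Subgroup.closure (T : Set G) * X * (S ∪ S⁻¹) ⊆ Subgroup.closure (T : Set G) * X := by
    rintro _ ⟨_, ⟨m, hm, x, hx, rfl⟩, d, hd, rfl⟩
    obtain ⟨c, hc, v, hv, hcv⟩ := hXDC (Set.mul_mem_mul hx hd)
    change c * v = x * d at hcv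
    change m * x * d ∈ _
    have hlc : l c ∈ Subgroup.closure (T : Set G) :=
      Subgroup.subset_closure (Finset.mem_coe.2 (Finset.mem_image_of_mem l hc))
    have hmxd : m * x * d = m * l c * ((l c)⁻¹ * c * v) := by
      rw [mul_assoc m x d, ← hcv]; group
    rw [hmxd]
    exact Set.mul_mem_mul (mul_mem hm hlc) (hXV (Set.mul_mem_mul (hlX c hc) hv))
  refine ⟨T, fun t ht => ?_, ?_⟩
  · obtain ⟨c, hc, rfl⟩ := Finset.mem_image.1 ht
    exact hlL c hc
  · rw [← hSO]
    refine Subgroup.coe_closure_subset_of_mul_subset ?_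
      ((Set.mul_subset_mul_left Set.subset_union_left).trans hY)
      ((Set.mul_subset_mul_left Set.subset_union_right).trans hY)
    simpa using
      Set.mul_mem_mul (one_mem (Subgroup.closure (T : Set G))) (Set.mul_mem_mul hR1 V.one_mem)

end TopologicalGroup

theorem stmt2 (G : Type*) [Group G] [TopologicalSpace G] [IsTopologicalGroup G] [T2Space G] [TotallyDisconnectedSpace G] [LocallyCompactSpace G]
    (H : Subgroup G) (hHcc : ∃ X : Set G, IsCompact X ∧ (H : Set G) * X = Set.univ)
    (O : Subgroup G) (hOopen : IsOpen (O : Set G))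
    (hOcg : ∃ S : Set G, S ⊆ (O : Set G) ∧ IsCompact S ∧ Subgroup.closure S = O) :
    ∃ T : Finset G, (↑T : Set G) ⊆ ((H ⊓ O : Subgroup G) : Set G) ∧
      ∃ X : Set G, X ⊆ (O : Set G) ∧ IsCompact X ∧
        ((Subgroup.closure (↑T : Set G) : Subgroup G) : Set G) * X = (O : Set G) := by
  obtain ⟨Xc, hXc, hHX⟩ := hHcc
  obtain ⟨S, -, hS, hSO⟩ := hOcg
  obtain ⟨V, hVo, hVc, hVO⟩ :=
    exists_isOpen_isCompact_subgroup_subset (hOopen.mem_nhds O.one_mem)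
  obtain ⟨F, -, hXF⟩ := hXc.exists_finset_subset_mul_subgroup hVo
  obtain ⟨R, hR1, hRO, hR⟩ := exists_finset_inter_mul_subset_inf_mul H O V hVO F
  have hOcover : (O : Set G) ⊆ ((H ⊓ O : Subgroup G) : Set G) * R * V := fun o ho =>
    hR ⟨ho, mul_assoc (H : Set G) F V ▸
      Set.mul_subset_mul_left hXF (hHX.symm ▸ Set.mem_univ o : o ∈ (H : Set G) * Xc)⟩
  obtain ⟨T, hTHO, hOT⟩ :=
    exists_finset_subset_closure_mul_of_subset_mul hVo hVc hVO hS hSO hR1 hRO hOcover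
  have hRVO : (R : Set G) * V ⊆ O := Subgroup.mul_subset hRO hVO
  have hTO : (Subgroup.closure (T : Set G) : Set G) ⊆ O :=
    (Subgroup.closure_le O).2 (hTHO.trans inf_le_right)
  exact ⟨T, hTHO, R * V, hRVO, R.finite_toSet.isCompact.mul hVc,
    (Subgroup.mul_subset hTO hRVO).antisymm hOT⟩
end

section
/- Let G be a t.d.l.c. group, U a compact open subgroup of G, and R a (not necessarily closed) subgroup of G such that G = RU. If R ∩ U contains a non-trivial normal subgroup of R, then U contains a non-trivial compact subgroup that is normal in G. -/
open scoped Pointwise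

open scoped Pointwise

/- Writing `g⁻¹ = r * u`, the conjugate `g k g⁻¹ = u⁻¹ (r⁻¹ k r) u` has `r⁻¹ k r ∈ K ≤ U`. -/
theorem Subgroup.le_normalCore_of_mul_eq_univ {G : Type*} [Group G] {R U K : Subgroup G}
    (hRU : (R : Set G) * (U : Set G) = Set.univ) (hKU : K ≤ U)
    (hK : ∀ r ∈ R, ∀ k ∈ K, r * k * r⁻¹ ∈ K) : K ≤ U.normalCore := by
  intro k hk g
  obtain ⟨r, hr, u, hu, hg⟩ : g⁻¹ ∈ (R : Set G) * (U : Set G) := hRU ▸ Set.mem_univ _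
  have hconj : r⁻¹ * k * r ∈ U := hKU (by simpa using hK r⁻¹ (R.inv_mem hr) k hk)
  have hg' : g = u⁻¹ * r⁻¹ := by rw [← inv_inv g, ← hg, mul_inv_rev]
  have key : g * k * g⁻¹ = u⁻¹ * (r⁻¹ * k * r) * u := by rw [hg']; group
  rw [key]
  exact U.mul_mem (U.mul_mem (U.inv_mem hu) hconj) hu

theorem Subgroup.exists_isCompact_normal_le_of_normalCore_ne_bot {G : Type*} [Group G]
    [TopologicalSpace G] [IsTopologicalGroup G] [T2Space G] {U : Subgroup G}
    (hU : IsCompact (U : Set G)) (hcore : U.normalCore ≠ ⊥) :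
    ∃ N : Subgroup G, N ≠ ⊥ ∧ N ≤ U ∧ IsCompact (N : Set G) ∧ N.Normal := by
  have hNU : U.normalCore.topologicalClosure ≤ U :=
    U.normalCore.topologicalClosure_minimal U.normalCore_le hU.isClosed
  exact ⟨U.normalCore.topologicalClosure,
    ne_bot_of_le_ne_bot hcore U.normalCore.le_topologicalClosure, hNU,
    hU.of_isClosed_subset U.normalCore.isClosed_topologicalClosure hNU,
    Subgroup.is_normal_topologicalClosure _⟩

theorem stmt6_general (G : Type*) [Group G] [TopologicalSpace G] [IsTopologicalGroup G] [T2Space G]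
    (U : Subgroup G) (hUcompact : IsCompact (U : Set G))
    (R : Subgroup G) (hRU : (R : Set G) * (U : Set G) = Set.univ)
    (hK : ∃ K : Subgroup G, K ≠ ⊥ ∧ K ≤ R ⊓ U ∧ ∀ r ∈ R, ∀ k ∈ K, r * k * r⁻¹ ∈ K) :
    ∃ N : Subgroup G, N ≠ ⊥ ∧ N ≤ U ∧ IsCompact (N : Set G) ∧ N.Normal := by
  obtain ⟨K, hKne, hKle, hKnorm⟩ := hK
  refine Subgroup.exists_isCompact_normal_le_of_normalCore_ne_bot hUcompact ?_
  exact ne_bot_of_le_ne_bot hKne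
    (Subgroup.le_normalCore_of_mul_eq_univ hRU (hKle.trans inf_le_right) hKnorm)

theorem stmt6 (G : Type*) [Group G] [TopologicalSpace G] [IsTopologicalGroup G] [T2Space G] [TotallyDisconnectedSpace G] [LocallyCompactSpace G]
    (U : Subgroup G) (hUcompact : IsCompact (U : Set G)) (hUopen : IsOpen (U : Set G))
    (R : Subgroup G) (hRU : (R : Set G) * (U : Set G) = Set.univ)
    (hK : ∃ K : Subgroup G, K ≠ ⊥ ∧ K ≤ R ⊓ U ∧ ∀ r ∈ R, ∀ k ∈ K, r * k * r⁻¹ ∈ K) :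
    ∃ N : Subgroup G, N ≠ ⊥ ∧ N ≤ U ∧ IsCompact (N : Set G) ∧ N.Normal :=
  stmt6_general G U hUcompact R hRU hK
end

section
/- Let G be a regionally expansive t.d.l.c. group. If G is quasi-discrete, i.e. the quasi-center QZ(G) is dense in G, then G is discrete. -/
open scoped Pointwise

open scoped Pointwise

/-
Cover a compact generating set `S` of `O` by finitely many translates `q • W` with `q`
quasi-central. An open subgroup `N` that is centralized by these `q` and normalized by the
compact group `W` is then normalized by `S`, hence by `O`; if also `N ≤ W`, it lies in the
trivial core of `W` in `O`. So the trivial subgroup is open.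
-/

open Topology

section Topological

variable {G : Type*} [Group G] [TopologicalSpace G]

theorem isOpen_centralizer_of_subset_quasiCenter {F : Set G} (hF : F.Finite)
    (hFQ : F ⊆ QuasiCenter G) : IsOpen (Subgroup.centralizer F : Set G) := by
  have hcoe : (Subgroup.centralizer F : Set G) = ⋂ q ∈ F, Subgroup.centralizer {q} := by
    ext x
    simp [Subgroup.mem_centralizer_iff]
  rw [hcoe]
  exact hF.isOpen_biInter fun q hq => hFQ hq

variable [IsTopologicalGroup G]

theorem IsCompact.eventually_forall_conj_mem {K U : Set G} (hK : IsCompact K) (hU : U ∈ 𝓝 1) :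
    ∀ᶠ x in 𝓝 1, ∀ k ∈ K, k * x * k⁻¹ ∈ U := by
  refine hK.eventually_forall_of_forall_eventually fun k _ => ?_
  have hconj : Filter.Tendsto (fun z : G × G => z.2 * z.1 * z.2⁻¹) (𝓝 (1, k)) (𝓝 1) := by
    simpa using (by fun_prop : Continuous fun z : G × G => z.2 * z.1 * z.2⁻¹).tendsto (1, k)
  exact hconj.eventually hU

/-- The elements conjugated into `V` by all of `W` form the required subgroup; it is open by the
tube lemma. -/
theorem Subgroup.exists_isOpen_le_and_le_normalizer {W V : Subgroup G}
    (hW : IsCompact (W : Set G)) (hV : IsOpen (V : Set G)) :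
    ∃ N : Subgroup G, IsOpen (N : Set G) ∧ N ≤ V ∧ W ≤ Subgroup.normalizer (N : Set G) := by
  set N : Subgroup G := ⨅ w : W, V.comap (MulAut.conj (w : G)).toMonoidHom
  have hmem : ∀ x, x ∈ N ↔ ∀ w ∈ W, w * x * w⁻¹ ∈ V := by
    simp [N, Subgroup.mem_iInf, MulAut.conj_apply]
  refine ⟨N, N.isOpen_of_mem_nhds (g := 1) ?_, fun x hx => ?_, ?_⟩
  · filter_upwards [hW.eventually_forall_conj_mem (hV.mem_nhds V.one_mem)] with x hx
    exact (hmem x).2 hx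
  · simpa using (hmem x).1 hx 1 W.one_mem
  · refine Subgroup.le_normalizer_iff.2 fun w hw x hx => (hmem _).2 fun w' hw' => ?_
    have := (hmem x).1 hx (w' * w) (W.mul_mem hw' hw)
    simpa [mul_assoc] using this

theorem Dense.exists_mem_smul_subgroup {D : Set G} (hD : Dense D) {W : Subgroup G}
    (hW : IsOpen (W : Set G)) (x : G) : ∃ q ∈ D, x ∈ q • (W : Set G) := by
  obtain ⟨q, hqW, hqD⟩ := hD.inter_open_nonempty _ (hW.smul x) ⟨x, 1, W.one_mem, mul_one x⟩
  refine ⟨q, hqD, (mem_leftCoset_iff q).2 ?_⟩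
  simpa using W.inv_mem ((mem_leftCoset_iff x).1 hqW)

theorem IsCompact.exists_finite_subset_subset_biUnion_smul {K D : Set G} (hK : IsCompact K)
    (hD : Dense D) {W : Subgroup G} (hW : IsOpen (W : Set G)) :
    ∃ F ⊆ D, F.Finite ∧ K ⊆ ⋃ q ∈ F, q • (W : Set G) :=
  hK.elim_finite_subcover_image (fun q _ => hW.smul q) fun x _ =>
    let ⟨_, hqD, hxq⟩ := hD.exists_mem_smul_subgroup hW x
    Set.mem_biUnion hqD hxq

end Topological

section Algebraic

variable {G : Type*} [Group G]

theorem Subgroup.closure_le_normalizer_of_subset_biUnion_smul {N W : Subgroup G} {F S : Set G}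
    (hFN : F ⊆ Subgroup.centralizer (N : Set G)) (hWN : W ≤ Subgroup.normalizer (N : Set G))
    (hSF : S ⊆ ⋃ q ∈ F, q • (W : Set G)) :
    Subgroup.closure S ≤ Subgroup.normalizer (N : Set G) := by
  refine (Subgroup.closure_le _).2 fun s hs => ?_
  obtain ⟨q, hqF, w, hw, rfl⟩ := Set.mem_iUnion₂.1 (hSF hs)
  exact Subgroup.mul_mem _ (Subgroup.centralizer_le_normalizer _ (hFN hqF)) (hWN hw)

theorem Subgroup.eq_bot_of_le_normalizer_of_normalCore_eq_bot {N W O : Subgroup G} (hNW : N ≤ W)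
    (hWO : W ≤ O) (hON : O ≤ Subgroup.normalizer (N : Set G))
    (hcore : (W.subgroupOf O).normalCore = ⊥) : N = ⊥ := by
  have hNO : N ≤ O := hNW.trans hWO
  have : (N.subgroupOf O).Normal := (Subgroup.normal_subgroupOf_iff_le_normalizer hNO).2 hON
  have hle : N.subgroupOf O ≤ ⊥ :=
    hcore ▸ Subgroup.normal_le_normalCore.2 (Subgroup.subgroupOf_mono O hNW)
  rwa [le_bot_iff, Subgroup.subgroupOf_eq_bot, disjoint_of_le_iff_left_eq_bot hNO] at hle

end Algebraic

theorem stmt7_general (G : Type*) [Group G] [TopologicalSpace G] [IsTopologicalGroup G]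
    (hre : RegionallyExpansive G) (hqd : Dense (QuasiCenter G)) :
    DiscreteTopology G := by
  obtain ⟨O, W, -, ⟨S, -, hS, rfl⟩, hWO, hWopen, hWcpt, hcore⟩ := hre
  obtain ⟨F, hFQ, hFfin, hSF⟩ := hS.exists_finite_subset_subset_biUnion_smul hqd hWopen
  obtain ⟨N, hNopen, hNV, hWN⟩ := Subgroup.exists_isOpen_le_and_le_normalizer (V := W ⊓ _) hWcpt
    (hWopen.inter (isOpen_centralizer_of_subset_quasiCenter hFfin hFQ))
  have hFN : F ⊆ Subgroup.centralizer (N : Set G) := fun q hq n hn =>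
    ((Subgroup.mem_centralizer_iff.1 (hNV hn).2) q hq).symm
  have hNbot : N = ⊥ := Subgroup.eq_bot_of_le_normalizer_of_normalCore_eq_bot
    (hNV.trans inf_le_left) hWO (Subgroup.closure_le_normalizer_of_subset_biUnion_smul hFN hWN hSF)
    hcore
  rw [discreteTopology_iff_isOpen_singleton_one]
  simpa [hNbot] using hNopen

theorem stmt7 (G : Type*) [Group G] [TopologicalSpace G] [IsTopologicalGroup G] [T2Space G] [TotallyDisconnectedSpace G] [LocallyCompactSpace G]
    (hre : RegionallyExpansive G) (hqd : Dense (QuasiCenter G)) :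
    DiscreteTopology G :=
  stmt7_general G hre hqd
end

section
/- Let G be a regionally expansive t.d.l.c. group that has no non-trivial quasi-discrete closed normal subgroup. Then the set M(G) of minimal non-trivial closed normal subgroups of G is finite, and the intersection over all N in M(G) of the quasi-centralizers QC_G(N) is the trivial subgroup. -/
open scoped Pointwise

open scoped Pointwise

/-!
For a closed normal subgroup `N`, the quasi-centralizer `QC(N)` is a normal subgroup, and the
closure of `N ∩ QC(N)` is a closed normal subgroup whose quasi-center is dense. Without non-trivial
quasi-discrete closed normal subgroups this forces `N ∩ QC(N) = 1`, hence `[QC(N), N] = 1`: the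
quasi-centralizer of `N` centralizes `N`. In particular no non-trivial closed normal subgroup is
abelian or meets an open subgroup trivially.

Let `O = ⟨S⟩` and `W` witness regional expansivity, and cover `S ⊆ F W` with `F` finite. If `N ∩ W`
lies in the open set `U` of elements conjugated into `W` by every `f ∈ F ∪ F⁻¹`, then `N ∩ W` is
normalized by `W` and `F`, hence by `O`, so it lies in the trivial core of `W` in `O` and `N` is
discrete. Hence the compact set `W \ U` avoids `1` and meets every non-trivial closed normal
subgroup, and so, by compactness, does the intersection of any directed family of them. This gives
minimal closed normal subgroups below every non-trivial one (Zorn) and shows that the common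
centralizer of the minimal ones is trivial, since it would otherwise contain an abelian minimal one.
As distinct minimal ones commute, there are finitely many: otherwise the centralizers of finitely
many of them would form a directed family of non-trivial closed normal subgroups with trivial
intersection.
-/

open Subgroup

section

variable {G : Type*} [Group G]

theorem mem_normalizer_of_forall_conj_mem {H : Subgroup G} {f : G}
    (h₁ : ∀ x ∈ H, f * x * f⁻¹ ∈ H) (h₂ : ∀ x ∈ H, f⁻¹ * x * f ∈ H) : f ∈ normalizer H :=
  mem_normalizer_iff.2 fun x => ⟨h₁ x, fun hx => by simpa [mul_assoc] using h₂ _ hx⟩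

variable [TopologicalSpace G]

theorem mem_quasiCentralizer_iff {K : Subgroup G} {g : G} :
    g ∈ QuasiCentralizer K ↔
      ∃ V : Subgroup G, V ≤ K ∧ IsOpen (V.subgroupOf K : Set K) ∧ V ≤ centralizer {g} :=
  exists_congr fun _ => and_congr_right' <| and_congr_right' <|
    forall₂_congr fun _ _ => (mem_centralizer_singleton_iff.trans eq_comm).symm

theorem mem_quasiCentralizer_of_isOpen {K W : Subgroup G} {g : G} (hW : IsOpen (W : Set G))
    (hg : K ⊓ W ≤ centralizer {g}) : g ∈ QuasiCentralizer K := by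
  refine mem_quasiCentralizer_iff.2 ⟨K ⊓ W, inf_le_left, ?_, hg⟩
  rw [inf_subgroupOf_left]
  exact hW.preimage continuous_subtype_val

def quasiCentralizerSubgroup (K : Subgroup G) : Subgroup G where
  carrier := QuasiCentralizer K
  one_mem' := mem_quasiCentralizer_of_isOpen (W := ⊤) isOpen_univ
    fun _ _ => mem_centralizer_singleton_iff.2 (by simp)
  mul_mem' {a b} ha hb := by
    obtain ⟨V₁, hV₁K, hV₁, ha⟩ := mem_quasiCentralizer_iff.1 ha
    obtain ⟨V₂, -, hV₂, hb⟩ := mem_quasiCentralizer_iff.1 hb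
    refine mem_quasiCentralizer_iff.2 ⟨V₁ ⊓ V₂, inf_le_left.trans hV₁K, hV₁.inter hV₂, ?_⟩
    exact fun v hv => mem_centralizer_singleton_iff.2 <|
      Commute.mul_right (mem_centralizer_singleton_iff.1 (ha hv.1))
        (mem_centralizer_singleton_iff.1 (hb hv.2))
  inv_mem' {a} ha := by
    obtain ⟨V, hVK, hV, ha⟩ := mem_quasiCentralizer_iff.1 ha
    exact mem_quasiCentralizer_iff.2 ⟨V, hVK, hV, fun v hv => mem_centralizer_singleton_iff.2 <|
      Commute.inv_right (mem_centralizer_singleton_iff.1 (ha hv))⟩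

instance normal_quasiCentralizerSubgroup [IsTopologicalGroup G] (K : Subgroup G) [hK : K.Normal] :
    (quasiCentralizerSubgroup K).Normal where
  conj_mem a ha h := by
    obtain ⟨V, hVK, hV, ha⟩ := mem_quasiCentralizer_iff.1 ha
    have hmem : ∀ x, x ∈ V.comap (MulAut.conj h⁻¹).toMonoidHom ↔ h⁻¹ * x * h ∈ V := by simp
    let c : K → K := fun k => ⟨h⁻¹ * k * h, by simpa using hK.conj_mem _ k.2 h⁻¹⟩
    have hc : Continuous c := by fun_prop
    refine mem_quasiCentralizer_iff.2 ⟨V.comap (MulAut.conj h⁻¹).toMonoidHom, ?_, ?_, ?_⟩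
    · intro x hx
      simpa [mul_assoc] using hK.conj_mem _ (hVK ((hmem x).1 hx)) h
    · rw [show ((V.comap _).subgroupOf K : Set K) = c ⁻¹' V.subgroupOf K from
        Set.ext fun k => hmem k]
      exact hV.preimage hc
    · intro x hx
      have key := Commute.conj (mem_centralizer_singleton_iff.1 (ha ((hmem x).1 hx))) h
      rw [show h * (h⁻¹ * x * h) * h⁻¹ = x by group] at key
      exact mem_centralizer_singleton_iff.2 key

def NoNontrivialQuasiDiscreteClosedNormal (G : Type*) [Group G] [TopologicalSpace G] : Prop :=
  ∀ N : Subgroup G, N.Normal → IsClosed (N : Set G) → Dense (QuasiCenter N) → N = ⊥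

theorem dense_quasiCenter_topologicalClosure_inf_quasiCentralizer [IsTopologicalGroup G]
    {N : Subgroup G} (hN : IsClosed (N : Set G)) :
    Dense (QuasiCenter (N ⊓ quasiCentralizerSubgroup N).topologicalClosure) := by
  set Q₀ := N ⊓ quasiCentralizerSubgroup N
  set Q := Q₀.topologicalClosure
  have hQN : Q ≤ N := Q₀.topologicalClosure_minimal inf_le_left hN
  have hQ₀ : Dense (Q₀.subgroupOf Q : Set Q) := by
    refine Subtype.dense_iff.2 <| Q₀.topologicalClosure_coe.symm.subset.trans <|
      closure_mono fun x hx => ⟨⟨x, Q₀.le_topologicalClosure hx⟩, hx, rfl⟩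
  refine hQ₀.mono fun q hq => ?_
  obtain ⟨V, -, hV, hVq⟩ := mem_quasiCentralizer_iff.1 (mem_inf.1 hq).2
  refine isOpen_mono (H₁ := V.subgroupOf Q) (fun y hy => ?_) ?_
  · exact mem_centralizer_singleton_iff.2 (Subtype.ext (mem_centralizer_singleton_iff.1 (hVq hy)))
  · exact hV.preimage (continuous_inclusion hQN)

namespace NoNontrivialQuasiDiscreteClosedNormal

variable [IsTopologicalGroup G] {N : Subgroup G} [N.Normal]

theorem inf_quasiCentralizerSubgroup_eq_bot (hG : NoNontrivialQuasiDiscreteClosedNormal G)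
    (hN : IsClosed (N : Set G)) : N ⊓ quasiCentralizerSubgroup N = ⊥ :=
  eq_bot_mono (le_topologicalClosure _) <|
    hG _ (is_normal_topologicalClosure _) (isClosed_topologicalClosure _)
      (dense_quasiCenter_topologicalClosure_inf_quasiCentralizer hN)

theorem quasiCentralizerSubgroup_le_centralizer (hG : NoNontrivialQuasiDiscreteClosedNormal G)
    (hN : IsClosed (N : Set G)) : quasiCentralizerSubgroup N ≤ centralizer N :=
  commutator_eq_bot_iff_le_centralizer.1 <| eq_bot_mono (commutator_le_inf _ _) <| by
    rw [inf_comm]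
    exact hG.inf_quasiCentralizerSubgroup_eq_bot hN

theorem eq_bot_of_le_quasiCentralizerSubgroup (hG : NoNontrivialQuasiDiscreteClosedNormal G)
    (hN : IsClosed (N : Set G)) (hle : N ≤ quasiCentralizerSubgroup N) : N = ⊥ := by
  rw [← inf_eq_left.2 hle]
  exact hG.inf_quasiCentralizerSubgroup_eq_bot hN

theorem eq_bot_of_inf_eq_bot (hG : NoNontrivialQuasiDiscreteClosedNormal G) {W : Subgroup G}
    (hN : IsClosed (N : Set G)) (hW : IsOpen (W : Set G)) (hNW : N ⊓ W = ⊥) : N = ⊥ :=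
  hG.eq_bot_of_le_quasiCentralizerSubgroup hN fun _ _ =>
    mem_quasiCentralizer_of_isOpen hW (hNW ▸ bot_le)

theorem eq_bot_of_le_centralizer (hG : NoNontrivialQuasiDiscreteClosedNormal G)
    (hN : IsClosed (N : Set G)) (hle : N ≤ centralizer N) : N = ⊥ :=
  hG.eq_bot_of_le_quasiCentralizerSubgroup hN fun _ hg =>
    mem_quasiCentralizer_of_isOpen (W := ⊤) isOpen_univ fun _ hv =>
      mem_centralizer_singleton_iff.2 (mem_centralizer_iff.1 (hle hg) _ (mem_inf.1 hv).1)

end NoNontrivialQuasiDiscreteClosedNormal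

theorem RegionallyExpansive.exists_forall_inf_eq_bot [IsTopologicalGroup G]
    (hre : RegionallyExpansive G) :
    ∃ (W : Subgroup G) (U : Set G), IsCompact (W : Set G) ∧ IsOpen (W : Set G) ∧ IsOpen U ∧ 1 ∈ U ∧
      ∀ N : Subgroup G, N.Normal → ((N ⊓ W : Subgroup G) : Set G) ⊆ U → N ⊓ W = ⊥ := by
  obtain ⟨O, W, -, ⟨S, -, hS, hSO⟩, hWO, hW, hWc, hcore⟩ := hre
  obtain ⟨F, hF⟩ := hS.elim_finite_subcover (fun g : G => g • (W : Set G)) (fun g => hW.smul g)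
    fun s _ => Set.mem_iUnion.2 ⟨s, by simp [Set.mem_smul_set_iff_inv_smul_mem, W.one_mem]⟩
  refine ⟨W, ⋂ f ∈ F, (fun x => f * x * f⁻¹) ⁻¹' W ∩ (fun x => f⁻¹ * x * f) ⁻¹' W,
    hWc, hW, isOpen_biInter_finset fun f _ => (hW.preimage (by fun_prop)).inter
      (hW.preimage (by fun_prop)), by simp [W.one_mem], fun N hN hNW => ?_⟩
  have hFnorm : ∀ f ∈ F, f ∈ normalizer (N ⊓ W) := fun f hf =>
    mem_normalizer_of_forall_conj_mem
      (fun x hx => mem_inf.2 ⟨hN.conj_mem x hx.1 f, (Set.mem_iInter₂.1 (hNW hx) f hf).1⟩)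
      (fun x hx => mem_inf.2 ⟨by simpa using hN.conj_mem x hx.1 f⁻¹,
        (Set.mem_iInter₂.1 (hNW hx) f hf).2⟩)
  have hWnorm : W ≤ normalizer (N ⊓ W) :=
    (le_inf le_normalizer_of_normal le_normalizer).trans inf_normalizer_le_normalizer_inf
  have hOnorm : O ≤ normalizer (N ⊓ W) := by
    rw [← hSO, closure_le]
    intro s hs
    obtain ⟨f, hf, hsf⟩ := Set.mem_iUnion₂.1 (hF hs)
    rw [Set.mem_smul_set_iff_inv_smul_mem, smul_eq_mul] at hsf
    simpa using mul_mem (hFnorm f hf) (hWnorm hsf)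
  have hNWO : N ⊓ W ≤ O := inf_le_right.trans hWO
  have := (normal_subgroupOf_iff_le_normalizer hNWO).2 hOnorm
  have hbot : (N ⊓ W).subgroupOf O = ⊥ :=
    eq_bot_mono (normal_le_normalCore.2 (subgroupOf_mono O inf_le_right)) hcore
  rwa [subgroupOf_eq_bot, disjoint_of_le_iff_left_eq_bot hNWO] at hbot

theorem isClosed_iInf_centralizer [T2Space G] [ContinuousMul G] {ι : Sort*} (s : ι → Set G) :
    IsClosed ((⨅ i, centralizer (s i) : Subgroup G) : Set G) := by
  rw [coe_iInf]
  exact isClosed_iInter fun i => Set.isClosed_centralizer (s i)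

theorem IsMinimalClosedNormal.le_centralizer {N M : Subgroup G} (hN : IsMinimalClosedNormal N)
    (hM : IsMinimalClosedNormal M) (hNM : N ≠ M) : N ≤ centralizer M := by
  have := hN.2.1
  have := hM.2.1
  have hbot : N ⊓ M = ⊥ := by
    by_contra h
    have hc : IsClosed ((N ⊓ M : Subgroup G) : Set G) := hN.2.2.1.inter hM.2.2.1
    exact hNM ((hN.2.2.2 _ h inferInstance hc inf_le_left).symm.trans
      (hM.2.2.2 _ h inferInstance hc inf_le_right))
  exact commutator_eq_bot_iff_le_centralizer.1 (eq_bot_mono (commutator_le_inf _ _) hbot)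

structure MeetsNontrivialClosedNormal (C : Set G) : Prop where
  isCompact : IsCompact C
  one_notMem : (1 : G) ∉ C
  inter_nonempty : ∀ N : Subgroup G, N.Normal → IsClosed (N : Set G) → N ≠ ⊥ →
    ((N : Set G) ∩ C).Nonempty

theorem exists_meetsNontrivialClosedNormal [IsTopologicalGroup G] (hre : RegionallyExpansive G)
    (hG : NoNontrivialQuasiDiscreteClosedNormal G) :
    ∃ C : Set G, MeetsNontrivialClosedNormal C := by
  obtain ⟨W, U, hWc, hW, hU, hU1, hWU⟩ := hre.exists_forall_inf_eq_bot
  refine ⟨W \ U, ⟨hWc.diff hU, fun h => h.2 hU1, fun N hN hNc hNbot => ?_⟩⟩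
  by_contra hempty
  refine hNbot (hG.eq_bot_of_inf_eq_bot hNc hW (hWU N hN fun x hx => ?_))
  by_contra hxU
  exact hempty ⟨x, hx.1, hx.2, hxU⟩

namespace MeetsNontrivialClosedNormal

variable [T2Space G] {C : Set G}

theorem iInf_ne_bot (hC : MeetsNontrivialClosedNormal C) {ι : Type*} [Nonempty ι]
    {K : ι → Subgroup G} (hdir : Directed (· ≥ ·) K) (hK : ∀ i, (K i).Normal)
    (hKc : ∀ i, IsClosed (K i : Set G)) (hKbot : ∀ i, K i ≠ ⊥) : ⨅ i, K i ≠ ⊥ := by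
  obtain ⟨z, hz⟩ := IsCompact.nonempty_iInter_of_directed_nonempty_isCompact_isClosed
    (fun i => (K i : Set G) ∩ C)
    (fun i j => let ⟨k, hik, hjk⟩ := hdir i j
      ⟨k, Set.inter_subset_inter_left _ hik, Set.inter_subset_inter_left _ hjk⟩)
    (fun i => hC.inter_nonempty _ (hK i) (hKc i) (hKbot i))
    (fun i => hC.isCompact.inter_left (hKc i))
    (fun i => (hKc i).inter hC.isCompact.isClosed)
  obtain ⟨i⟩ := ‹Nonempty ι›
  refine fun h => hC.one_notMem ?_
  have hz1 : z ∈ ⨅ i, K i := mem_iInf.2 fun i => (Set.mem_iInter.1 hz i).1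
  rw [h, mem_bot] at hz1
  exact hz1 ▸ (Set.mem_iInter.1 hz i).2

theorem exists_isMinimalClosedNormal_le (hC : MeetsNontrivialClosedNormal C) {K : Subgroup G}
    (hK : K.Normal) (hKc : IsClosed (K : Set G)) (hKbot : K ≠ ⊥) :
    ∃ N, IsMinimalClosedNormal N ∧ N ≤ K := by
  let s : Set (Subgroup G) := {N | N.Normal ∧ IsClosed (N : Set G) ∧ N ≠ ⊥}
  have hchain (c : Set (Subgroup G)ᵒᵈ) (hcs : c ⊆ s) (hc : IsChain (· ≤ ·) c) (y) (hy : y ∈ c) :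
      ∃ ub ∈ s, ∀ N ∈ c, N ≤ ub := by
    have : Nonempty c := ⟨⟨y, hy⟩⟩
    refine ⟨OrderDual.toDual (⨅ M : c, OrderDual.ofDual M.1),
      ⟨normal_iInf_normal fun M => (hcs M.2).1, ?_, hC.iInf_ne_bot hc.directedOn.directed_val
        (fun M => (hcs M.2).1) (fun M => (hcs M.2).2.1) fun M => (hcs M.2).2.2⟩,
      fun N hN => iInf_le (fun M : c => OrderDual.ofDual M.1) ⟨N, hN⟩⟩
    change IsClosed ((⨅ M : c, OrderDual.ofDual M.1 : Subgroup G) : Set G)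
    rw [coe_iInf]
    exact isClosed_iInter fun M => (hcs M.2).2.1
  obtain ⟨N, hNK, hN⟩ := zorn_le_nonempty₀ (α := (Subgroup G)ᵒᵈ) s hchain K ⟨hK, hKc, hKbot⟩
  refine ⟨N, ⟨hN.prop.2.2, hN.prop.1, hN.prop.2.1, fun M hMbot hM hMc hMN => ?_⟩, hNK⟩
  exact le_antisymm hMN (hN.2 ⟨hM, hMc, hMbot⟩ hMN)

theorem iInf_centralizer_eq_bot [IsTopologicalGroup G] (hC : MeetsNontrivialClosedNormal C)
    (hG : NoNontrivialQuasiDiscreteClosedNormal G) :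
    ⨅ N : {N : Subgroup G // IsMinimalClosedNormal N}, centralizer (N : Set G) = ⊥ := by
  by_contra hT
  have (N : {N : Subgroup G // IsMinimalClosedNormal N}) : (N : Subgroup G).Normal := N.2.2.1
  obtain ⟨N, hN, hNT⟩ := hC.exists_isMinimalClosedNormal_le (normal_iInf_normal fun _ =>
    normal_centralizer) (isClosed_iInf_centralizer _) hT
  have := hN.2.1
  exact hN.1 (hG.eq_bot_of_le_centralizer hN.2.2.1
    (hNT.trans (iInf_le (fun M : {N : Subgroup G // IsMinimalClosedNormal N} => _) ⟨N, hN⟩)))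

theorem finite_of_iInf_centralizer_eq_bot [ContinuousMul G] (hC : MeetsNontrivialClosedNormal C)
    {ι : Type*} {N : ι → Subgroup G} [∀ i, (N i).Normal] (hNbot : ∀ i, N i ≠ ⊥)
    (hcomm : Pairwise fun i j => N i ≤ centralizer (N j))
    (hT : ⨅ i, centralizer (N i : Set G) = ⊥) : Finite ι := by
  by_contra hfin
  have : Infinite ι := not_finite_iff_infinite.1 hfin
  refine hC.iInf_ne_bot (K := fun A : Finset ι => ⨅ i : A, centralizer (N i : Set G))
    (Antitone.directed_ge fun A B hAB =>
      le_iInf fun i => iInf_le_of_le ⟨i, Finset.mem_of_subset hAB i.2⟩ le_rfl)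
    (fun _ => normal_iInf_normal fun _ => normal_centralizer) (fun _ => isClosed_iInf_centralizer _)
    (fun A hA => ?_) (eq_bot_mono ?_ hT)
  · obtain ⟨j, hj⟩ := Infinite.exists_notMem_finset A
    exact hNbot j (eq_bot_mono (le_iInf fun i => hcomm (ne_of_mem_of_not_mem i.2 hj).symm) hA)
  · exact le_iInf fun i => iInf_le_of_le {i}
      (iInf_le (fun j : ({i} : Finset ι) => _) ⟨i, Finset.mem_singleton_self i⟩)

end MeetsNontrivialClosedNormal

end

theorem stmt9_general (G : Type*) [Group G] [TopologicalSpace G] [IsTopologicalGroup G] [T2Space G]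
    (hre : RegionallyExpansive G)
    (hnoqd : ∀ N : Subgroup G, N.Normal → IsClosed (N : Set G) →
      Dense (QuasiCenter ↥N) → N = ⊥) :
    {N : Subgroup G | IsMinimalClosedNormal N}.Finite ∧
    (⋂ N ∈ {N : Subgroup G | IsMinimalClosedNormal N}, QuasiCentralizer N) = ({1} : Set G) := by
  have hG : NoNontrivialQuasiDiscreteClosedNormal G := hnoqd
  obtain ⟨C, hC⟩ := exists_meetsNontrivialClosedNormal hre hG
  have hT := hC.iInf_centralizer_eq_bot hG
  have (N : {N : Subgroup G // IsMinimalClosedNormal N}) : (N : Subgroup G).Normal := N.2.2.1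
  refine ⟨Set.finite_coe_iff.1 (hC.finite_of_iInf_centralizer_eq_bot (fun N => N.2.1)
    (fun N M h => N.2.le_centralizer M.2 (Subtype.coe_injective.ne h)) hT), ?_⟩
  refine Set.Subset.antisymm (fun g hg => ?_) fun g hg => hg ▸ Set.mem_iInter₂.2 fun N _ =>
    (quasiCentralizerSubgroup N).one_mem
  rw [Set.mem_singleton_iff, ← mem_bot, ← hT, mem_iInf]
  exact fun N => hG.quasiCentralizerSubgroup_le_centralizer N.2.2.2.1 (Set.mem_iInter₂.1 hg N N.2)

theorem stmt9 (G : Type*) [Group G] [TopologicalSpace G] [IsTopologicalGroup G] [T2Space G] [TotallyDisconnectedSpace G] [LocallyCompactSpace G]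
    (hre : RegionallyExpansive G)
    (hnoqd : ∀ N : Subgroup G, N.Normal → IsClosed (N : Set G) →
      Dense (QuasiCenter ↥N) → N = ⊥) :
    {N : Subgroup G | IsMinimalClosedNormal N}.Finite ∧
    (⋂ N ∈ {N : Subgroup G | IsMinimalClosedNormal N}, QuasiCentralizer N) = ({1} : Set G) :=
  stmt9_general G hre hnoqd
end

section
/- Let G and H be t.d.l.c. groups and ψ : H → G a continuous injective group homomorphism such that ψ(H) is cocompact in G. If G is regionally expansive, then H is regionally expansive. -/
open scoped Pointwise

open scoped Pointwise

/-!
Pick a finite `E ∋ 1` with `X ⊆ E W`, so that `G = ψ(H) E W` with `E W` compact and open.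
By compactness there is a finite `F ⊆ H` with `E W s^{±1} ⊆ ψ(F) E W` for every generator `s`
of `O`, hence `O ⊆ ψ(⟨F⟩) E W`. With a compact open subgroup `U` of `H` (van Dantzig), put
`O_H = ⟨U ∪ F⟩` and `W_H = U ∩ ψ⁻¹(⋂_{e ∈ E} e W e⁻¹)`. If `x` lies in the core of `W_H` in
`O_H`, writing any `o⁻¹ ∈ O` as `ψ(h) e w` shows `o ψ(x) o⁻¹ ∈ W`, so `ψ(x)` lies in the
(trivial) core of `W` in `O`, and `x = 1` by injectivity.
-/

namespace Subgroup

variable {G : Type*} [Group G]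

theorem mem_biInf_conj_smul {W : Subgroup G} {E : Set G} {g : G} :
    g ∈ ⨅ e ∈ E, MulAut.conj e • W ↔ ∀ e ∈ E, e⁻¹ * g * e ∈ W := by
  simp [mem_pointwise_smul_iff_inv_smul_mem]

theorem eq_one_of_forall_conj_mem_of_normalCore_subgroupOf_eq_bot {O W : Subgroup G} (hWO : W ≤ O)
    (hcore : (W.subgroupOf O).normalCore = ⊥) {g : G} (hg : ∀ o ∈ O, o * g * o⁻¹ ∈ W) :
    g = 1 := by
  have hgW : g ∈ W := by simpa using hg 1 O.one_mem
  have hmem : (⟨g, hWO hgW⟩ : O) ∈ (W.subgroupOf O).normalCore := fun o => hg o o.2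
  simpa [hcore] using hmem

theorem closure_subset_mul_of_mul_subset {A : Subgroup G} {C S : Set G} (hC : (1 : G) ∈ C)
    (hCS : C * (S ∪ S⁻¹) ⊆ A * C) : (closure S : Set G) ⊆ A * C := by
  have step : ∀ x ∈ (A : Set G) * C, ∀ y ∈ S ∪ S⁻¹, x * y ∈ (A : Set G) * C := by
    rintro _ ⟨a, ha, c, hc, rfl⟩ y hy
    obtain ⟨a', ha', c', hc', hcy⟩ := hCS (Set.mul_mem_mul hc hy)
    exact ⟨a * a', A.mul_mem ha ha', c', hc', by simp only at hcy ⊢; rw [mul_assoc, hcy, mul_assoc]⟩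
  intro g hg
  induction hg using closure_induction_right with
  | one => exact ⟨1, A.one_mem, 1, hC, one_mul 1⟩
  | mul_right x _ y hy hx => exact step x hx y (Or.inl hy)
  | mul_inv_cancel x _ y hy hx => exact step x hx y⁻¹ (Or.inr (Set.inv_mem_inv.mpr hy))

variable [TopologicalSpace G] [IsTopologicalGroup G]

theorem isOpen_biInf_conj_smul {W : Subgroup G} (hW : IsOpen (W : Set G)) {E : Set G}
    (hE : E.Finite) : IsOpen ((⨅ e ∈ E, MulAut.conj e • W : Subgroup G) : Set G) := by
  simp only [coe_iInf]
  refine hE.isOpen_biInter fun e _ => ?_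
  have : ((MulAut.conj e • W : Subgroup G) : Set G) = (fun g => e⁻¹ * g * e) ⁻¹' W := by
    ext g
    rw [SetLike.mem_coe, mem_pointwise_smul_iff_inv_smul_mem]
    simp
  rw [this]
  exact hW.preimage (by fun_prop)

end Subgroup

section Topological

variable {G : Type*} [Group G] [TopologicalSpace G] [IsTopologicalGroup G]

theorem IsCompact.exists_finset_subset_image_mul {ι : Type*} {f : ι → G} {K U : Set G}
    (hK : IsCompact K) (hU : IsOpen U) (hKU : K ⊆ Set.range f * U) :
    ∃ F : Finset ι, K ⊆ f '' F * U := by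
  obtain ⟨F, hF⟩ := hK.elim_finite_subcover (fun i => f i • U) (fun i => hU.smul (f i)) (by
    rintro _ hx
    obtain ⟨_, ⟨i, rfl⟩, u, hu, rfl⟩ := hKU hx
    exact Set.mem_iUnion.mpr ⟨i, Set.smul_mem_smul_set hu⟩)
  exact ⟨F, hF.trans (Set.iUnion₂_subset fun i hi =>
    Set.smul_set_subset_mul (Set.mem_image_of_mem f hi))⟩

theorem exists_isOpen_isCompact_subgroup [LocallyCompactSpace G] [T2Space G]
    [TotallyDisconnectedSpace G] : ∃ U : Subgroup G, IsOpen (U : Set G) ∧ IsCompact (U : Set G) := by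
  obtain ⟨C, hC, hC1⟩ := exists_compact_mem_nhds (1 : G)
  obtain ⟨V, hVclopen, h1V, hVC⟩ := loc_compact_Haus_tot_disc_of_zero_dim.mem_nhds_iff.1 hC1
  have hV : IsCompact V := hC.of_isClosed_subset hVclopen.1 hVC
  obtain ⟨T, hT, hTV⟩ := compact_open_separated_mul_left hV hVclopen.2 le_rfl
  -- the stabilizer of `V` under left translation is open, and lies in `V` because `1 ∈ V`
  let U := MulAction.stabilizer G V
  have hTU : T ∩ T⁻¹ ⊆ U := by
    rintro g ⟨hg, hg'⟩
    exact (Set.smul_set_subset_mul hg |>.trans hTV).antisymm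
      (Set.subset_smul_set_iff.mpr (Set.smul_set_subset_mul (Set.mem_inv.mp hg') |>.trans hTV))
  have hUopen : IsOpen (U : Set G) :=
    U.isOpen_of_mem_nhds (Filter.mem_of_superset (Filter.inter_mem hT (inv_mem_nhds_one G hT)) hTU)
  have hUV : (U : Set G) ⊆ V := fun g hg => by
    rw [← MulAction.mem_stabilizer_iff.mp hg]
    simpa using Set.smul_mem_smul_set (a := g) h1V
  exact ⟨U, hUopen, hV.of_isClosed_subset (U.isClosed_of_isOpen hUopen) hUV⟩

end Topological

section Cocompact

variable {G H : Type*} [Group G] [Group H]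

theorem normalCore_subgroupOf_eq_bot_of_subset_map_mul {ψ : H →* G} (hψ : Function.Injective ψ)
    {O W : Subgroup G} (hWO : W ≤ O) (hcore : (W.subgroupOf O).normalCore = ⊥) {E : Set G}
    {OH WH : Subgroup H} (hO : (O : Set G) ⊆ (OH.map ψ : Set G) * (E * (W : Set G)))
    (hWH : WH ≤ (⨅ e ∈ E, MulAut.conj e • W).comap ψ) :
    (WH.subgroupOf OH).normalCore = ⊥ := by
  refine (Subgroup.eq_bot_iff_forall _).mpr fun ⟨x, hxOH⟩ hx => ?_
  have hconj : ∀ h ∈ OH, ∀ e ∈ E, e⁻¹ * ψ (h⁻¹ * x * h) * e ∈ W := fun h hh =>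
    Subgroup.mem_biInf_conj_smul.mp
      (hWH (by simpa using Subgroup.mem_subgroupOf.mp (hx ⟨h, hh⟩⁻¹)))
  have hψx : ψ x = 1 := Subgroup.eq_one_of_forall_conj_mem_of_normalCore_subgroupOf_eq_bot hWO hcore
    fun o ho => by
      obtain ⟨_, ⟨h, hh, rfl⟩, _, ⟨e, he, w, hw, rfl⟩, ho'⟩ := hO (O.inv_mem ho)
      have : o * ψ x * o⁻¹ = w⁻¹ * (e⁻¹ * ψ (h⁻¹ * x * h) * e) * w := by
        rw [← inv_inv o, ← ho']
        simp only [map_mul, map_inv]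
        group
      rw [this]
      exact W.mul_mem (W.mul_mem (W.inv_mem hw) (hconj h hh e he)) hw
  simpa using hψ (hψx.trans ψ.map_one.symm)

variable [TopologicalSpace G] [IsTopologicalGroup G]

theorem exists_finset_closure_subset_map_closure_mul (f : H →* G) {C S : Set G}
    (hC : IsCompact C) (hCopen : IsOpen C) (hC1 : (1 : G) ∈ C) (hfC : Set.range f * C = Set.univ)
    (hS : IsCompact S) :
    ∃ F : Finset H, (Subgroup.closure S : Set G) ⊆ (Subgroup.closure (F : Set H)).map f * C := by
  obtain ⟨F, hF⟩ := (hC.mul (hS.union hS.inv)).exists_finset_subset_image_mul hCopen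
    (hfC ▸ Set.subset_univ _)
  refine ⟨F, Subgroup.closure_subset_mul_of_mul_subset hC1 (hF.trans (Set.mul_subset_mul_right ?_))⟩
  rintro _ ⟨h, hh, rfl⟩
  exact Subgroup.mem_map_of_mem f (Subgroup.subset_closure hh)

end Cocompact

theorem stmt14_general (G H : Type*) [Group G] [TopologicalSpace G] [IsTopologicalGroup G]
    [Group H] [TopologicalSpace H] [IsTopologicalGroup H] [T2Space H] [TotallyDisconnectedSpace H] [LocallyCompactSpace H]
    (ψ : H →* G) (hcont : Continuous ψ) (hinj : Function.Injective ψ)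
    (hcocompact : ∃ X : Set G, IsCompact X ∧ Set.range ⇑ψ * X = Set.univ)
    (hre : RegionallyExpansive G) :
    RegionallyExpansive H := by
  obtain ⟨O, W, -, ⟨S, -, hS, rfl⟩, hWO, hWopen, hWcomp, hcore⟩ := hre
  obtain ⟨X, hX, hXcover⟩ := hcocompact
  obtain ⟨E₀, hXE₀⟩ := hX.exists_finset_subset_image_mul (f := id) hWopen
    (by simp [Set.univ_mul ⟨1, W.one_mem⟩])
  set E : Set G := insert 1 E₀
  have hE : E.Finite := E₀.finite_toSet.insert 1
  have hψE : Set.range ψ * (E * (W : Set G)) = Set.univ := by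
    refine Set.eq_univ_of_univ_subset (hXcover ▸ Set.mul_subset_mul_left ?_)
    simpa using hXE₀.trans (Set.mul_subset_mul_right (Set.subset_insert 1 _))
  obtain ⟨F, hOF⟩ := exists_finset_closure_subset_map_closure_mul ψ (hE.isCompact.mul hWcomp)
    hWopen.mul_left ⟨1, Set.mem_insert 1 _, 1, W.one_mem, one_mul 1⟩ hψE hS
  obtain ⟨U, hUopen, hUcomp⟩ := exists_isOpen_isCompact_subgroup (G := H)
  set OH := Subgroup.closure ((U : Set H) ∪ F)
  set WH := U ⊓ (⨅ e ∈ E, MulAut.conj e • W).comap ψ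
  have hUOH : U ≤ OH := fun u hu => Subgroup.subset_closure (Or.inl hu)
  have hWHopen : IsOpen (WH : Set H) :=
    hUopen.inter ((Subgroup.isOpen_biInf_conj_smul hWopen hE).preimage hcont)
  refine ⟨OH, WH, Subgroup.isOpen_mono hUOH hUopen,
    ⟨U ∪ F, Subgroup.subset_closure, hUcomp.union F.finite_toSet.isCompact, rfl⟩,
    inf_le_left.trans hUOH, hWHopen,
    hUcomp.of_isClosed_subset (WH.isClosed_of_isOpen hWHopen) inf_le_left,
    normalCore_subgroupOf_eq_bot_of_subset_map_mul hinj hWO hcore ?_ inf_le_right⟩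
  exact hOF.trans (Set.mul_subset_mul_right (Subgroup.map_mono
    (Subgroup.closure_mono Set.subset_union_right)))

theorem stmt14 (G H : Type*) [Group G] [TopologicalSpace G] [IsTopologicalGroup G] [T2Space G] [TotallyDisconnectedSpace G] [LocallyCompactSpace G]
    [Group H] [TopologicalSpace H] [IsTopologicalGroup H] [T2Space H] [TotallyDisconnectedSpace H] [LocallyCompactSpace H]
    (ψ : H →* G) (hcont : Continuous ψ) (hinj : Function.Injective ψ)
    (hcocompact : ∃ X : Set G, IsCompact X ∧ Set.range ⇑ψ * X = Set.univ)
    (hre : RegionallyExpansive G) :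
    RegionallyExpansive H :=
  stmt14_general G H ψ hcont hinj hcocompact hre
end

section
/- Let G be a robustly monolithic t.d.l.c. group and H a non-trivial closed subgroup of G such that the monolith Mon(G) normalizes H. Then Mon(G) is contained in H, and H is itself robustly monolithic with Mon(H) = Mon(G). In particular, Mon(G) is a topologically simple robustly monolithic group. -/
open scoped Pointwise

open scoped Pointwise

/-
If `M = Mon(G)` normalizes a non-trivial closed subgroup `H`, then `H ∩ M` is a closed normal
subgroup of the topologically simple group `M`. If it were trivial, `M` and `H` would commute, so
the centralizer of `M` would be a non-trivial closed normal subgroup of `G`, hence would contain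
`M`; but an abelian regionally expansive group is discrete, since the normal core of a compact
open subgroup is then the subgroup itself. So `M ≤ H`. Every non-trivial closed normal subgroup of
`H` is again normalized by `M`, hence contains `M`, so `Mon(H) = M`, and `H` inherits robust
monolithicity. Taking `H = M` gives the last claims.
-/

namespace Subgroup

variable {G : Type*} [Group G]

theorem normalCore_subgroupOf_eq_bot_iff {O W : Subgroup G} :
    (W.subgroupOf O).normalCore = ⊥ ↔ ∀ x ∈ O, (∀ o ∈ O, o * x * o⁻¹ ∈ W) → x = 1 := by
  rw [eq_bot_iff_forall]
  constructor
  · intro h x hx hcore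
    exact congrArg Subtype.val (h ⟨x, hx⟩ fun o => hcore o o.2)
  · intro h x hx
    exact Subtype.ext (h x x.2 fun o ho => hx ⟨o, ho⟩)

theorem commute_of_le_normalizer_of_disjoint {M K : Subgroup G} (hM : M.Normal)
    (hMK : M ≤ normalizer (K : Set G)) (hdis : Disjoint M K) {m k : G} (hm : m ∈ M)
    (hk : k ∈ K) : Commute m k := by
  rw [← commutatorElement_eq_one_iff_commute]
  refine disjoint_def.1 hdis ?_ ?_
  · rw [commutatorElement_def]
    simpa only [mul_assoc] using M.mul_mem hm (hM.conj_mem _ (M.inv_mem hm) k)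
  · rw [commutatorElement_def]
    exact K.mul_mem ((mem_normalizer_iff.1 (hMK hm) k).1 hk) (K.inv_mem hk)

end Subgroup

open Subgroup

section Monolith

variable {G : Type*} [Group G] [TopologicalSpace G]

theorem le_monolith_iff {K : Subgroup G} :
    K ≤ Monolith G ↔ ∀ N : Subgroup G, N ≠ ⊥ → N.Normal → IsClosed (N : Set G) → K ≤ N := by
  simp only [Monolith, le_iInf_iff]

theorem monolith_le_of_ne_bot {N : Subgroup G} (hN : N ≠ ⊥) (hNn : N.Normal)
    (hNc : IsClosed (N : Set G)) : Monolith G ≤ N :=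
  le_monolith_iff.1 le_rfl N hN hNn hNc

instance monolith_normal : (Monolith G).Normal :=
  normal_iInf_normal fun _ => normal_iInf_normal fun _ => normal_iInf_normal fun hN =>
    normal_iInf_normal fun _ => hN

theorem isClosed_monolith : IsClosed (Monolith G : Set G) := by
  simp only [Monolith, coe_iInf]
  exact isClosed_iInter fun _ => isClosed_iInter fun _ => isClosed_iInter fun _ =>
    isClosed_iInter id

end Monolith

namespace ContinuousMulEquiv

variable {A B : Type*} [Group A] [TopologicalSpace A] [Group B] [TopologicalSpace B]

theorem topologicallySimple (e : A ≃ₜ* B) (h : TopologicallySimple A) : TopologicallySimple B := by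
  obtain ⟨hnt, hsimple⟩ := h
  refine ⟨e.injective.nontrivial, fun N hN hNc => ?_⟩
  let f : A →* B := e
  have hsurj : (N.comap f).map f = N := map_comap_eq_self_of_surjective e.surjective N
  rcases hsimple _ (hN.comap f) (hNc.preimage e.continuous) with h | h
  · exact Or.inl (by rw [← hsurj, h, Subgroup.map_bot])
  · exact Or.inr (by rw [← hsurj, h, map_top_of_surjective _ e.surjective])

theorem regionallyExpansive (e : A ≃ₜ* B) (h : RegionallyExpansive A) :
    RegionallyExpansive B := by
  obtain ⟨O, W, hO, ⟨S, hSO, hS, hSO'⟩, hWO, hWopen, hW, hcore⟩ := h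
  let f : A →* B := e
  have hopen : ∀ U : Subgroup A, IsOpen (U : Set A) → IsOpen (U.map f : Set B) := fun U hU => by
    rw [coe_map]; exact e.toHomeomorph.isOpenMap _ hU
  refine ⟨O.map f, W.map f, hopen O hO, ⟨f '' S, Set.image_mono hSO, hS.image e.continuous,
    by rw [← MonoidHom.map_closure, hSO']⟩, map_mono hWO, hopen W hWopen,
    by rw [coe_map]; exact hW.image e.continuous, ?_⟩
  rw [normalCore_subgroupOf_eq_bot_iff] at hcore ⊢
  rintro _ ⟨x, hx, rfl⟩ hxcore
  have hx1 : x = 1 := hcore x hx fun o ho => by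
    have := hxcore (f o) (mem_map_of_mem f ho)
    rwa [← map_inv, ← map_mul, ← map_mul, mem_map_iff_mem (f := f) e.injective] at this
  simp [hx1]

end ContinuousMulEquiv

theorem RegionallyExpansive.discreteTopology {A : Type*} [Group A] [TopologicalSpace A]
    [IsTopologicalGroup A] [IsMulCommutative A] (h : RegionallyExpansive A) :
    DiscreteTopology A := by
  obtain ⟨O, W, -, -, hWO, hWopen, -, hcore⟩ := h
  rw [normalCore_subgroupOf_eq_bot_iff] at hcore
  have hW : W = ⊥ := eq_bot_iff_forall _ |>.2 fun x hx =>
    hcore x (hWO hx) fun o _ => by rwa [mul_comm' o x, mul_inv_cancel_right]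
  rw [discreteTopology_iff_isOpen_singleton_one, ← coe_bot, ← hW]
  exact hWopen

namespace RobustlyMonolithic

variable {G : Type*} [Group G] [TopologicalSpace G] [IsTopologicalGroup G] [T2Space G]

theorem monolith_le (hG : RobustlyMonolithic G) {K : Subgroup G} (hK : K ≠ ⊥)
    (hKc : IsClosed (K : Set G)) (hKn : Monolith G ≤ normalizer (K : Set G)) :
    Monolith G ≤ K := by
  obtain ⟨-, hnd, hre, -, hsimple⟩ := hG
  rcases hsimple _ (normal_subgroupOf_of_le_normalizer hKn) (hKc.preimage continuous_subtype_val)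
    with hbot | htop
  · refine absurd ?_ hnd
    have hKC : K ≤ centralizer (Monolith G : Set G) := fun k hk => mem_centralizer_iff.2
      fun m hm => commute_of_le_normalizer_of_disjoint monolith_normal hKn
        (subgroupOf_eq_bot.1 hbot).symm hm hk
    have hMC : Monolith G ≤ centralizer (Monolith G : Set G) :=
      monolith_le_of_ne_bot (ne_bot_of_le_ne_bot hK hKC) inferInstance
        (Set.isClosed_centralizer _)
    have := le_centralizer_iff_isMulCommutative.1 hMC
    exact hre.discreteTopology
  · exact subgroupOf_eq_top.1 htop

theorem monolith_eq_subgroupOf (hG : RobustlyMonolithic G) {H : Subgroup G} (hH : H ≠ ⊥)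
    (hHc : IsClosed (H : Set G)) (hHn : Monolith G ≤ normalizer (H : Set G)) :
    Monolith H = (Monolith G).subgroupOf H := by
  have hMH := hG.monolith_le hH hHc hHn
  refine le_antisymm (monolith_le_of_ne_bot ?_ (monolith_normal.subgroupOf H)
    (isClosed_monolith.preimage continuous_subtype_val)) ?_
  · rw [Ne, subgroupOf_eq_bot, disjoint_iff, inf_of_le_left hMH]
    exact hG.1
  · refine le_monolith_iff.2 fun N hN hNn hNc => ?_
    have hNmap : Monolith G ≤ N.map H.subtype := by
      have : ((N.map H.subtype).subgroupOf H).Normal := by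
        rwa [subgroupOf, comap_map_eq_self_of_injective H.subtype_injective]
      refine hG.monolith_le ((map_eq_bot_iff_of_injective N H.subtype_injective).not.2 hN)
        ?_ ((le_normalizer_of_normal_subgroupOf (map_subtype_le N)).trans' hMH)
      rw [coe_map]
      exact hHc.isClosedEmbedding_subtypeVal.isClosedMap _ hNc
    intro x hx
    obtain ⟨n, hn, hnx⟩ := hNmap (mem_subgroupOf.1 hx)
    rwa [← Subtype.ext hnx]

theorem of_le_normalizer (hG : RobustlyMonolithic G) {H : Subgroup G} (hH : H ≠ ⊥)
    (hHc : IsClosed (H : Set G)) (hHn : Monolith G ≤ normalizer (H : Set G)) :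
    RobustlyMonolithic H := by
  have e : Monolith H ≃ₜ* Monolith G := by
    rw [hG.monolith_eq_subgroupOf hH hHc hHn]
    exact subgroupOfContinuousMulEquivOfLe (hG.monolith_le hH hHc hHn)
  obtain ⟨-, hnd, hre, hsimple⟩ := hG
  have := hsimple.1
  exact ⟨(nontrivial_iff_ne_bot _).1 e.surjective.nontrivial,
    fun hd => hnd (e.symm.toHomeomorph.discreteTopology_iff.2 hd),
    e.symm.regionallyExpansive hre, e.symm.topologicallySimple hsimple⟩

end RobustlyMonolithic

theorem stmt17_general (G : Type*) [Group G] [TopologicalSpace G] [IsTopologicalGroup G] [T2Space G]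
    (hG : RobustlyMonolithic G)
    (H : Subgroup G) (hHne : H ≠ ⊥) (hHclosed : IsClosed (H : Set G))
    (hnorm : Monolith G ≤ Subgroup.normalizer (H : Set G)) :
    Monolith G ≤ H ∧ RobustlyMonolithic ↥H ∧
    Subgroup.map H.subtype (Monolith ↥H) = Monolith G ∧
    RobustlyMonolithic ↥(Monolith G) ∧ TopologicallySimple ↥(Monolith G) := by
  have hMH := hG.monolith_le hHne hHclosed hnorm
  refine ⟨hMH, hG.of_le_normalizer hHne hHclosed hnorm, ?_,
    hG.of_le_normalizer hG.1 isClosed_monolith le_normalizer_of_normal, hG.2.2.2⟩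
  rw [hG.monolith_eq_subgroupOf hHne hHclosed hnorm, subgroupOf_map_subtype, inf_of_le_left hMH]

theorem stmt17 (G : Type*) [Group G] [TopologicalSpace G] [IsTopologicalGroup G] [T2Space G] [TotallyDisconnectedSpace G] [LocallyCompactSpace G]
    (hG : RobustlyMonolithic G)
    (H : Subgroup G) (hHne : H ≠ ⊥) (hHclosed : IsClosed (H : Set G))
    (hnorm : Monolith G ≤ Subgroup.normalizer (H : Set G)) :
    Monolith G ≤ H ∧ RobustlyMonolithic ↥H ∧
    Subgroup.map H.subtype (Monolith ↥H) = Monolith G ∧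
    RobustlyMonolithic ↥(Monolith G) ∧ TopologicallySimple ↥(Monolith G) :=
  stmt17_general G hG H hHne hHclosed hnorm
end
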